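/- Let S be a finite set with optimal set S_opt and mutation kernel P^m. Construct the level partition S_0 = S_opt, S_1, …, S_L and values G'(x) by the greedy minimization recursion: S_l consists of the minimizers of (1 + Σ_{k<l} Σ_{y ∈ S_k} P^m(x,y) G'(y)) / (Σ_{k<l} Σ_{y ∈ S_k} P^m(x,y)) among remaining points. Choose real numbers f_0 > f_1 > … > f_L and define f(x) = f_l for x ∈ S_l. Then for every fitness function g on S with the same optimal set S_opt, the expected runtime of the elitist (1+1) EA (accepting strictly fitter mutants only) satisfies G_f(x) ≤ G_g(x) for all x ∈ S; i.e., f is the easiest function in the class. -/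
import Mathlib


/-- The quotient appearing in the greedy level construction. -/
noncomputable def Qval {S : Type*} [Fintype S]
    (Pm : S → S → ℝ) (ℓ : S → ℕ) (G' : S → ℝ) (l : ℕ) (x : S) : ℝ :=
  (1 + ∑ y, (if ℓ y < l then Pm x y * G' y else 0)) /
    (∑ y, (if ℓ y < l then Pm x y else 0))

/-- Transition kernel of the strictly elitist (1+1) EA with mutation kernel
`Pm` and fitness `f`. -/
noncomputable def eaP {S : Type*} [Fintype S] [DecidableEq S]
    (Pm : S → S → ℝ) (f : S → ℝ) (x y : S) : ℝ :=
  if y = x then 1 - ∑ z, (if f x < f z then Pm x z else 0)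
  else if f x < f y then Pm x y else 0

open Finset

section helpers
variable {S : Type*} [Fintype S] [DecidableEq S]

lemma sum_eaP_mul (Pm : S → S → ℝ) (g : S → ℝ) (x : S) (v : S → ℝ) :
    ∑ y, eaP Pm g x y * v y
      = (1 - ∑ z, (if g x < g z then Pm x z else 0)) * v x
        + ∑ y, (if g x < g y then Pm x y * v y else 0) := by
  classical
  have h0 : ∑ y, eaP Pm g x y * v y
      = eaP Pm g x x * v x + ∑ y ∈ univ.erase x, eaP Pm g x y * v y :=
    (Finset.add_sum_erase _ _ (mem_univ x)).symm
  have h1 : ∑ y ∈ univ.erase x, eaP Pm g x y * v y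
      = ∑ y ∈ univ.erase x, (if g x < g y then Pm x y * v y else 0) := by
    refine Finset.sum_congr rfl fun y hy => ?_
    have hyx : y ≠ x := (Finset.mem_erase.mp hy).1
    simp only [eaP, if_neg hyx]
    split_ifs <;> ring
  have h2 : ∑ y, (if g x < g y then Pm x y * v y else 0)
      = (if g x < g x then Pm x x * v x else 0)
        + ∑ y ∈ univ.erase x, (if g x < g y then Pm x y * v y else 0) :=
    (Finset.add_sum_erase _ _ (mem_univ x)).symm
  rw [h0, h1, h2, if_neg (lt_irrefl _)]
  simp only [eaP, if_pos rfl, if_true, eq_self_iff_true]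
  ring

lemma eaP_rowsum (Pm : S → S → ℝ) (g : S → ℝ) (x : S) :
    ∑ y, eaP Pm g x y = 1 := by
  have h := sum_eaP_mul Pm g x (fun _ => 1)
  simp only [mul_one] at h
  rw [h]; ring

lemma eaP_nonneg (Pm : S → S → ℝ) (g : S → ℝ) (x y : S)
    (hPm0 : ∀ a b, 0 ≤ Pm a b) (hPm1 : ∑ z, Pm x z = 1) :
    0 ≤ eaP Pm g x y := by
  unfold eaP
  split_ifs with h1 h2
  · have hle : ∑ z, (if g x < g z then Pm x z else 0) ≤ ∑ z, Pm x z := by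
      refine Finset.sum_le_sum fun z _ => ?_
      split_ifs
      · exact le_rfl
      · exact hPm0 x z
    linarith
  · exact hPm0 x y
  · exact le_rfl

end helpers

section gprime
variable {S : Type*} [Fintype S] [DecidableEq S]
variable (Pm : S → S → ℝ) (ℓ : S → ℕ) (G' : S → ℝ)

lemma G'_nonneg (hPm0 : ∀ x y, 0 ≤ Pm x y)
    (hG'0 : ∀ x, ℓ x = 0 → G' x = 0)
    (hden : ∀ (l : ℕ) (x : S), 1 ≤ l → l ≤ ℓ x →
      0 < ∑ y, (if ℓ y < l then Pm x y else 0))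
    (hval : ∀ x, 1 ≤ ℓ x → G' x = Qval Pm ℓ G' (ℓ x) x) :
    ∀ x, 0 ≤ G' x := by
  suffices h : ∀ n x, ℓ x ≤ n → 0 ≤ G' x from fun x => h (ℓ x) x le_rfl
  intro n
  induction n with
  | zero => intro x hx; exact le_of_eq (hG'0 x (Nat.le_zero.mp hx)).symm
  | succ n ih =>
    intro x hx
    rcases Nat.eq_zero_or_pos (ℓ x) with h0 | h1
    · exact le_of_eq (hG'0 x h0).symm
    · rw [hval x h1, Qval]
      apply div_nonneg
      · have hA : 0 ≤ ∑ y, (if ℓ y < ℓ x then Pm x y * G' y else 0) := by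
          refine Finset.sum_nonneg fun y _ => ?_
          split_ifs with h
          · exact mul_nonneg (hPm0 x y) (ih y (by omega))
          · exact le_rfl
        linarith
      · exact le_of_lt (hden (ℓ x) x h1 le_rfl)

lemma G'_key
    (hden : ∀ (l : ℕ) (x : S), 1 ≤ l → l ≤ ℓ x →
      0 < ∑ y, (if ℓ y < l then Pm x y else 0))
    (hval : ∀ x, 1 ≤ ℓ x → G' x = Qval Pm ℓ G' (ℓ x) x) :
    ∀ x, 1 ≤ ℓ x →
      (∑ y, (if ℓ y < ℓ x then Pm x y else 0)) * G' x
        = 1 + ∑ y, (if ℓ y < ℓ x then Pm x y * G' y else 0) := by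
  intro x hx
  have hB := hden (ℓ x) x hx le_rfl
  rw [hval x hx, Qval, mul_div_cancel₀ _ (ne_of_gt hB)]

lemma G'_mono (hPm0 : ∀ x y, 0 ≤ Pm x y)
    (hG'0 : ∀ x, ℓ x = 0 → G' x = 0)
    (hden : ∀ (l : ℕ) (x : S), 1 ≤ l → l ≤ ℓ x →
      0 < ∑ y, (if ℓ y < l then Pm x y else 0))
    (hval : ∀ x, 1 ≤ ℓ x → G' x = Qval Pm ℓ G' (ℓ x) x)
    (hmin : ∀ x z, 1 ≤ ℓ x → ℓ x ≤ ℓ z →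
      Qval Pm ℓ G' (ℓ x) x ≤ Qval Pm ℓ G' (ℓ x) z) :
    ∀ x z, ℓ x ≤ ℓ z → G' x ≤ G' z := by
  have hnn := G'_nonneg Pm ℓ G' hPm0 hG'0 hden hval
  suffices h : ∀ n z, ℓ z ≤ n → ∀ x, ℓ x ≤ ℓ z → G' x ≤ G' z from
    fun x z hxz => h (ℓ z) z le_rfl x hxz
  intro n
  induction n with
  | zero =>
    intro z hz x hxz
    have h1 : ℓ x = 0 := by omega
    have h2 : ℓ z = 0 := by omega
    rw [hG'0 x h1, hG'0 z h2]
  | succ n ih =>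
    intro z hz x hxz
    rcases Nat.eq_zero_or_pos (ℓ x) with h0 | h1
    · rw [hG'0 x h0]; exact hnn z
    · have hz1 : 1 ≤ ℓ z := le_trans h1 hxz
      have inner : ∀ m, ℓ x + m ≤ ℓ z →
          G' x * (∑ y, (if ℓ y < ℓ x + m then Pm z y else 0))
            ≤ 1 + ∑ y, (if ℓ y < ℓ x + m then Pm z y * G' y else 0) := by
        intro m
        induction m with
        | zero =>
          intro _
          have hmin' := hmin x z h1 hxz
          rw [← hval x h1, Qval] at hmin'
          have hB : 0 < ∑ y, (if ℓ y < ℓ x then Pm z y else 0) :=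
            hden (ℓ x) z h1 hxz
          rw [Nat.add_zero]
          calc G' x * (∑ y, (if ℓ y < ℓ x then Pm z y else 0))
              ≤ ((1 + ∑ y, (if ℓ y < ℓ x then Pm z y * G' y else 0)) /
                  (∑ y, (if ℓ y < ℓ x then Pm z y else 0)))
                * (∑ y, (if ℓ y < ℓ x then Pm z y else 0)) :=
                mul_le_mul_of_nonneg_right hmin' hB.le
            _ = 1 + ∑ y, (if ℓ y < ℓ x then Pm z y * G' y else 0) :=
                div_mul_cancel₀ _ hB.ne'
        | succ m ihm =>
          intro hm
          have ihm' := ihm (by omega)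
          have hsplitB : ∑ y, (if ℓ y < ℓ x + (m+1) then Pm z y else 0)
              = (∑ y, (if ℓ y < ℓ x + m then Pm z y else 0))
                + ∑ y, (if ℓ y = ℓ x + m then Pm z y else 0) := by
            rw [← Finset.sum_add_distrib]
            refine Finset.sum_congr rfl fun y _ => ?_
            by_cases h : ℓ y < ℓ x + m
            · rw [if_pos (by omega), if_pos h, if_neg (by omega), add_zero]
            · by_cases h2 : ℓ y = ℓ x + m
              · rw [if_pos (by omega), if_neg h, if_pos h2, zero_add]
              · rw [if_neg (by omega), if_neg h, if_neg h2, add_zero]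
          have hsplitA : ∑ y, (if ℓ y < ℓ x + (m+1) then Pm z y * G' y else 0)
              = (∑ y, (if ℓ y < ℓ x + m then Pm z y * G' y else 0))
                + ∑ y, (if ℓ y = ℓ x + m then Pm z y * G' y else 0) := by
            rw [← Finset.sum_add_distrib]
            refine Finset.sum_congr rfl fun y _ => ?_
            by_cases h : ℓ y < ℓ x + m
            · rw [if_pos (by omega), if_pos h, if_neg (by omega), add_zero]
            · by_cases h2 : ℓ y = ℓ x + m
              · rw [if_pos (by omega), if_neg h, if_pos h2, zero_add]
              · rw [if_neg (by omega), if_neg h, if_neg h2, add_zero]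
          have hsum : (∑ y, (if ℓ y = ℓ x + m then Pm z y else 0)) * G' x
              ≤ ∑ y, (if ℓ y = ℓ x + m then Pm z y * G' y else 0) := by
            rw [Finset.sum_mul]
            refine Finset.sum_le_sum fun y _ => ?_
            split_ifs with h
            · exact mul_le_mul_of_nonneg_left
                (ih y (by omega) x (by omega)) (hPm0 z y)
            · simp
          rw [hsplitB, hsplitA, mul_add]
          linarith
      have hfin := inner (ℓ z - ℓ x) (by omega)
      have hEq : ℓ x + (ℓ z - ℓ x) = ℓ z := by omega
      rw [hEq] at hfin
      have hB := hden (ℓ z) z hz1 le_rfl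
      rw [hval z hz1, Qval, le_div_iff₀ hB]
      exact hfin

end gprime


/-- The function `f` produced by the greedy minimizing level construction
(constant on each level `S_l`, strictly decreasing in the level index) is the
easiest function in the class of all fitness functions with optimal set
`opt`: for every such `g`, the expected runtime satisfies `G_f x ≤ G_g x`
for all `x`. -/
theorem stmt7 {S : Type*} [Fintype S] [DecidableEq S]
    (Pm : S → S → ℝ) (opt : Set S) (ℓ : S → ℕ) (G' : S → ℝ) (f : S → ℝ)
    (hPm0 : ∀ x y, 0 ≤ Pm x y) (hPm1 : ∀ x, ∑ y, Pm x y = 1)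
    (hne : opt.Nonempty)
    (hℓ0 : ∀ x, ℓ x = 0 ↔ x ∈ opt)
    (hG'0 : ∀ x, ℓ x = 0 → G' x = 0)
    (hden : ∀ (l : ℕ) (x : S), 1 ≤ l → l ≤ ℓ x →
      0 < ∑ y, (if ℓ y < l then Pm x y else 0))
    (hval : ∀ x, 1 ≤ ℓ x → G' x = Qval Pm ℓ G' (ℓ x) x)
    (hmin : ∀ x z, 1 ≤ ℓ x → ℓ x ≤ ℓ z →
      Qval Pm ℓ G' (ℓ x) x ≤ Qval Pm ℓ G' (ℓ x) z)
    -- `f` takes the value `f_l` on level `S_l`, with `f_0 > f_1 > ⋯ > f_L`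
    (hfconst : ∀ x y, ℓ x = ℓ y → f x = f y)
    (hfdec : ∀ x y, ℓ x < ℓ y → f y < f x)
    -- expected runtime of the elitist (1+1) EA on `f`
    (Gf : S → ℝ)
    (hGf0 : ∀ x, 0 ≤ Gf x) (hGfopt : ∀ x ∈ opt, Gf x = 0)
    (hGfrec : ∀ x ∉ opt, Gf x = 1 + ∑ y, eaP Pm f x y * Gf y) :
    ∀ (g Gg : S → ℝ),
      (∀ x, x ∈ opt ↔ ∀ y, g y ≤ g x) →
      (∀ x, 0 ≤ Gg x) → (∀ x ∈ opt, Gg x = 0) →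
      (∀ x ∉ opt, Gg x = 1 + ∑ y, eaP Pm g x y * Gg y) →
      ∀ x, Gf x ≤ Gg x := by
  intro g Gg hg hGg0 hGgopt hGgrec
  have hnn := G'_nonneg Pm ℓ G' hPm0 hG'0 hden hval
  have hmono := G'_mono Pm ℓ G' hPm0 hG'0 hden hval hmin
  have hkey := G'_key Pm ℓ G' hden hval
  -- acceptance under f corresponds to level decrease
  have facc : ∀ x y, f x < f y ↔ ℓ y < ℓ x := by
    intro x y
    constructor
    · intro h
      by_contra hc
      push_neg at hc
      rcases lt_or_eq_of_le hc with h2 | h2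
      · exact absurd (hfdec x y h2) (by linarith)
      · exact absurd (hfconst x y h2) (by linarith)
    · exact fun h => hfdec y x h
  -- Gf equals G'
  have GfEq : ∀ x, Gf x = G' x := by
    suffices h : ∀ n x, ℓ x ≤ n → Gf x = G' x from fun x => h (ℓ x) x le_rfl
    intro n
    induction n with
    | zero =>
      intro x hx
      have h0 : ℓ x = 0 := Nat.le_zero.mp hx
      rw [hGfopt x ((hℓ0 x).mp h0), hG'0 x h0]
    | succ n ih =>
      intro x hx
      rcases Nat.eq_zero_or_pos (ℓ x) with h0 | h1
      · rw [hGfopt x ((hℓ0 x).mp h0), hG'0 x h0]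
      · have hnopt : x ∉ opt := fun hc => by
          have := (hℓ0 x).mpr hc; omega
        have hrec := hGfrec x hnopt
        rw [sum_eaP_mul Pm f x Gf] at hrec
        have hT : (∑ z, (if f x < f z then Pm x z else 0))
            = ∑ z, (if ℓ z < ℓ x then Pm x z else 0) :=
          Finset.sum_congr rfl fun z _ => if_congr (facc x z) rfl rfl
        have hS : (∑ y, (if f x < f y then Pm x y * Gf y else 0))
            = ∑ y, (if ℓ y < ℓ x then Pm x y * G' y else 0) := by
          refine Finset.sum_congr rfl fun y _ => ?_
          by_cases h : ℓ y < ℓ x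
          · rw [if_pos ((facc x y).mpr h), if_pos h, ih y (by omega)]
          · rw [if_neg (fun hc => h ((facc x y).mp hc)), if_neg h]
        rw [hT, hS] at hrec
        have hB := hden (ℓ x) x h1 le_rfl
        have hk := hkey x h1
        have hBGf : (∑ z, (if ℓ z < ℓ x then Pm x z else 0)) * Gf x
            = 1 + ∑ y, (if ℓ y < ℓ x then Pm x y * G' y else 0) := by
          nlinarith [hrec]
        have := hBGf.trans hk.symm
        exact mul_left_cancel₀ hB.ne' this
  -- the one-step slack inequality for g
  have slack : ∀ x, x ∉ opt → G' x ≤ 1 + ∑ y, eaP Pm g x y * G' y := by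
    intro x hx
    have h1 : 1 ≤ ℓ x :=
      Nat.one_le_iff_ne_zero.mpr (fun h => hx ((hℓ0 x).mp h))
    rw [sum_eaP_mul Pm g x G']
    have hk := hkey x h1
    have e2 : ∀ y, (if g x < g y then Pm x y else 0) * G' x
          - (if g x < g y then Pm x y * G' y else 0)
        ≤ (if ℓ y < ℓ x then Pm x y else 0) * G' x
          - (if ℓ y < ℓ x then Pm x y * G' y else 0) := by
      intro y
      by_cases hgy : g x < g y <;> by_cases hl : ℓ y < ℓ x <;>
        simp only [hgy, hl, if_pos, if_neg, if_true, if_false,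
          zero_mul, sub_zero, zero_sub, sub_self]
      · exact le_rfl
      · have hle : G' x ≤ G' y := hmono x y (by omega)
        nlinarith [hPm0 x y]
      · have hle : G' y ≤ G' x := hmono y x (by omega)
        nlinarith [hPm0 x y]
      · exact le_rfl
    have e3 : ∑ y, ((if g x < g y then Pm x y else 0) * G' x
          - (if g x < g y then Pm x y * G' y else 0))
        ≤ ∑ y, ((if ℓ y < ℓ x then Pm x y else 0) * G' x
          - (if ℓ y < ℓ x then Pm x y * G' y else 0)) :=
      Finset.sum_le_sum fun y _ => e2 y
    rw [Finset.sum_sub_distrib, ← Finset.sum_mul] at e3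
    rw [Finset.sum_sub_distrib, ← Finset.sum_mul] at e3
    nlinarith [e3, hk]
  -- key supermartingale inequality for the difference
  have hkey2 : ∀ x, x ∉ opt →
      ∑ y, eaP Pm g x y * (Gg y - G' y) ≤ Gg x - G' x := by
    intro x hx
    have e : ∑ y, eaP Pm g x y * (Gg y - G' y)
        = (∑ y, eaP Pm g x y * Gg y) - ∑ y, eaP Pm g x y * G' y := by
      simp only [mul_sub, Finset.sum_sub_distrib]
    rw [e, hGgrec x hx]
    linarith [slack x hx]
  -- minimizer argument
  intro x
  rw [GfEq x]
  obtain ⟨x0, -, hx0⟩ :=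
    Finset.exists_min_image Finset.univ (fun z => Gg z - G' z)
      ⟨x, Finset.mem_univ x⟩
  have hx0x := hx0 x (Finset.mem_univ x)
  have h0 : 0 ≤ Gg x0 - G' x0 := by
    by_contra hneg
    push_neg at hneg
    have hopt0 : ∀ z, z ∈ opt → Gg z - G' z = 0 := by
      intro z hz
      rw [hGgopt z hz, hG'0 z ((hℓ0 z).mpr hz)]; ring
    set A : Finset S := Finset.univ.filter (fun z => Gg z - G' z ≤ Gg x0 - G' x0) with hA
    have hAopt : ∀ z ∈ A, z ∉ opt := by
      intro z hz hzo
      have h1 := hopt0 z hzo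
      have h2 := (Finset.mem_filter.mp hz).2
      linarith
    have hclosed : ∀ u ∈ A, ∀ y, eaP Pm g u y ≠ 0 → y ∈ A := by
      intro u hu y hy
      have hu' : u ∉ opt := hAopt u hu
      have h1 := hkey2 u hu'
      have hDu : Gg u - G' u ≤ Gg x0 - G' x0 := (Finset.mem_filter.mp hu).2
      have hrow := eaP_rowsum Pm g u
      have hsum : Gg x0 - G' x0 ≤ ∑ y', eaP Pm g u y' * (Gg y' - G' y') := by
        calc Gg x0 - G' x0 = ∑ y', eaP Pm g u y' * (Gg x0 - G' x0) := by
              rw [← Finset.sum_mul, hrow, one_mul]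
          _ ≤ _ := Finset.sum_le_sum fun y' _ =>
              mul_le_mul_of_nonneg_left (hx0 y' (Finset.mem_univ y'))
                (eaP_nonneg Pm g u y' hPm0 (hPm1 u))
      have hz : ∑ y', eaP Pm g u y' * ((Gg y' - G' y') - (Gg x0 - G' x0)) = 0 := by
        have he : ∑ y', eaP Pm g u y' * ((Gg y' - G' y') - (Gg x0 - G' x0))
            = (∑ y', eaP Pm g u y' * (Gg y' - G' y'))
              - ∑ y', eaP Pm g u y' * (Gg x0 - G' x0) := by
          simp only [mul_sub, Finset.sum_sub_distrib]
        rw [he, ← Finset.sum_mul, hrow, one_mul]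
        linarith
      have hterm := (Finset.sum_eq_zero_iff_of_nonneg (fun y' _ =>
          mul_nonneg (eaP_nonneg Pm g u y' hPm0 (hPm1 u))
            (by linarith [hx0 y' (Finset.mem_univ y')]))).mp hz y (Finset.mem_univ y)
      rcases mul_eq_zero.mp hterm with h | h
      · exact absurd h hy
      · exact Finset.mem_filter.mpr ⟨Finset.mem_univ y, by linarith⟩
    obtain ⟨u, huA, humin⟩ := Finset.exists_min_image A Gg
      ⟨x0, Finset.mem_filter.mpr ⟨Finset.mem_univ x0, le_rfl⟩⟩
    have hu' := hAopt u huA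
    have hrec := hGgrec u hu'
    have hge : Gg u ≤ ∑ y, eaP Pm g u y * Gg y := by
      calc Gg u = ∑ y, eaP Pm g u y * Gg u := by
            rw [← Finset.sum_mul, eaP_rowsum, one_mul]
        _ ≤ _ := by
            refine Finset.sum_le_sum fun y _ => ?_
            by_cases h : eaP Pm g u y = 0
            · simp [h]
            · exact mul_le_mul_of_nonneg_left (humin y (hclosed u huA y h))
                (eaP_nonneg Pm g u y hPm0 (hPm1 u))
    linarith
  linarith
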